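/- Suppose the Verblunsky coefficients satisfy |α_n| ≤ C q^n for all n ≥ 0, where C > 0 and q ∈ (0,1). Then there exists an analytic function S on {z ∈ ℂ : |z| < 1/q} such that Φ_n* converges to S uniformly on every compact subset of {z : |z| < 1/q}. -/

import Mathlib

open Polynomial Filter Topology

/-- The monic orthogonal polynomials on the unit circle, defined by the Szegő
recursion `Φ₀ = 1`, `Φ_{n+1}(z) = z Φ_n(z) - conj(α_n) Φ_n^*(z)`, where the reversed
polynomial is `P^*(z) = Σ_{j=0}^n conj(c_{n-j}) z^j`. -/
noncomputable def PhiP (α : ℕ → ℂ) : ℕ → Polynomial ℂ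
  | 0 => 1
  | n + 1 => X * PhiP α n -
      Polynomial.C ((starRingEnd ℂ) (α n)) *
        Polynomial.reflect n (Polynomial.map (starRingEnd ℂ) (PhiP α n))

/-- The reversed polynomial `Φ_n^*(z) = z^n conj(Φ_n(1/conj z))`. -/
noncomputable def PhiStarP (α : ℕ → ℂ) (n : ℕ) : Polynomial ℂ :=
  Polynomial.reflect n (Polynomial.map (starRingEnd ℂ) (PhiP α n))

/-!
Reversing the Szegő recursion gives `Φₙ₊₁* = Φₙ* - αₙ z Φₙ`, so `Φₙ*` is the partial sum of
the series `1 - Σ αₖ z Φₖ(z)`. On `|z| ≤ ρ` with `ρ ≥ 1`, both `|Φₙ*(z)|` and `|Φₙ(z)| / ρⁿ`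
are bounded by `∏ (1 + |αₖ| ρᵏ⁺¹) ≤ exp (Σ |αₖ| ρᵏ⁺¹)`, which is finite as soon as `qρ < 1`.
The Weierstrass M-test then gives uniform convergence on every such disc, and the limit is
holomorphic as a locally uniform limit of polynomials.
-/

open Metric Finset

lemma Polynomial.reflect_succ_X_mul {R : Type*} [Semiring R] {p : R[X]} {n : ℕ}
    (hp : p.natDegree ≤ n) : reflect (n + 1) (X * p) = reflect n p := by
  rw [add_comm, reflect_mul _ _ natDegree_X_le hp, reflect_one_X, one_mul]

section Szego

variable (α : ℕ → ℂ)

lemma PhiP_succ (n : ℕ) :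
    PhiP α (n + 1) = X * PhiP α n - C (starRingEnd ℂ (α n)) * PhiStarP α n := rfl

lemma natDegree_PhiP_le : ∀ n, (PhiP α n).natDegree ≤ n
  | 0 => by simp [PhiP]
  | n + 1 => by
    have ih := natDegree_PhiP_le n
    rw [PhiP_succ]
    refine (natDegree_sub_le _ _).trans (max_le ?_ ?_)
    · exact natDegree_mul_le.trans (by linarith [natDegree_X_le (R := ℂ)])
    · refine natDegree_C_mul_le _ _ |>.trans <| natDegree_reflect_le.trans ?_
      exact max_le n.le_succ (natDegree_map_le.trans ih |>.trans n.le_succ)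

lemma PhiStarP_succ (n : ℕ) :
    PhiStarP α (n + 1) = PhiStarP α n - C (α n) * (X * PhiP α n) := by
  have hdeg := natDegree_PhiP_le α n
  have hconj : (PhiStarP α n).map (starRingEnd ℂ) = reflect n (PhiP α n) := by
    rw [PhiStarP, ← reflect_map, Polynomial.map_map, RingHomInvPair.comp_eq₂, Polynomial.map_id]
  have hrev : reflect (n + 1) (reflect n (PhiP α n)) = X * PhiP α n := by
    rw [← reflect_succ_X_mul hdeg, reflect_reflect]
  rw [PhiStarP, PhiP_succ, Polynomial.map_sub, Polynomial.map_mul, Polynomial.map_mul, map_C,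
    Complex.conj_conj, Polynomial.map_X, hconj, reflect_sub, reflect_C_mul, hrev,
    reflect_succ_X_mul (natDegree_map_le.trans hdeg), PhiStarP]

lemma eval_PhiStarP_succ (n : ℕ) (z : ℂ) :
    (PhiStarP α (n + 1)).eval z = (PhiStarP α n).eval z - α n * (z * (PhiP α n).eval z) := by
  simp [PhiStarP_succ]

lemma eval_PhiP_succ (n : ℕ) (z : ℂ) :
    (PhiP α (n + 1)).eval z
      = z * (PhiP α n).eval z - starRingEnd ℂ (α n) * (PhiStarP α n).eval z := by
  simp [PhiP_succ]

lemma eval_PhiStarP_eq_one_sub_sum (n : ℕ) (z : ℂ) :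
    (PhiStarP α n).eval z = 1 - ∑ k ∈ range n, α k * (z * (PhiP α k).eval z) := by
  induction n with
  | zero => simp [PhiStarP, PhiP]
  | succ n ih => rw [eval_PhiStarP_succ, ih, sum_range_succ]; ring

end Szego

section Bounds

variable {α : ℕ → ℂ} {ρ : ℝ}

lemma norm_eval_PhiStarP_le_prod_and_norm_eval_PhiP_le (hρ : 1 ≤ ρ) {z : ℂ} (hz : ‖z‖ ≤ ρ)
    (n : ℕ) :
    ‖(PhiStarP α n).eval z‖ ≤ ∏ k ∈ range n, (1 + ‖α k‖ * ρ ^ (k + 1)) ∧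
      ‖(PhiP α n).eval z‖ ≤ ρ ^ n * ∏ k ∈ range n, (1 + ‖α k‖ * ρ ^ (k + 1)) := by
  induction n with
  | zero => simp [PhiStarP, PhiP]
  | succ n ih =>
    obtain ⟨hstar, hphi⟩ := ih
    set P := ∏ k ∈ range n, (1 + ‖α k‖ * ρ ^ (k + 1))
    have hP : 0 ≤ P := prod_nonneg fun k _ => by positivity
    have hρn : 1 ≤ ρ ^ (n + 1) := one_le_pow₀ hρ
    rw [prod_range_succ, eval_PhiStarP_succ, eval_PhiP_succ]
    constructor
    · calc ‖(PhiStarP α n).eval z - α n * (z * (PhiP α n).eval z)‖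
          ≤ ‖(PhiStarP α n).eval z‖ + ‖α n‖ * (‖z‖ * ‖(PhiP α n).eval z‖) := by
            simpa only [norm_mul] using norm_sub_le _ (α n * (z * (PhiP α n).eval z))
        _ ≤ P + ‖α n‖ * (ρ * (ρ ^ n * P)) := by gcongr
        _ = P * (1 + ‖α n‖ * ρ ^ (n + 1)) := by ring
    · calc ‖z * (PhiP α n).eval z - starRingEnd ℂ (α n) * (PhiStarP α n).eval z‖
          ≤ ‖z‖ * ‖(PhiP α n).eval z‖ + ‖α n‖ * ‖(PhiStarP α n).eval z‖ := by
            simpa only [norm_mul, Complex.norm_conj] using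
              norm_sub_le (z * (PhiP α n).eval z) (starRingEnd ℂ (α n) * (PhiStarP α n).eval z)
        _ ≤ ρ * (ρ ^ n * P) + ‖α n‖ * P := by gcongr
        _ ≤ ρ * (ρ ^ n * P) + ‖α n‖ * P * (ρ ^ (n + 1) * ρ ^ (n + 1)) := by
            have := one_le_mul_of_one_le_of_one_le hρn hρn
            exact (add_le_add_iff_left _).2 (le_mul_of_one_le_right (by positivity) this)
        _ = ρ ^ (n + 1) * (P * (1 + ‖α n‖ * ρ ^ (n + 1))) := by ring

lemma norm_eval_PhiP_le_exp_tsum (hρ : 1 ≤ ρ) (hsum : Summable fun k => ‖α k‖ * ρ ^ (k + 1))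
    {z : ℂ} (hz : ‖z‖ ≤ ρ) (n : ℕ) :
    ‖(PhiP α n).eval z‖ ≤ ρ ^ n * Real.exp (∑' k, ‖α k‖ * ρ ^ (k + 1)) := by
  have hnonneg : ∀ k, 0 ≤ ‖α k‖ * ρ ^ (k + 1) := fun k => by positivity
  calc _ ≤ ρ ^ n * ∏ k ∈ range n, (1 + ‖α k‖ * ρ ^ (k + 1)) :=
        (norm_eval_PhiStarP_le_prod_and_norm_eval_PhiP_le hρ hz n).2
    _ ≤ ρ ^ n * Real.exp (∑ k ∈ range n, ‖α k‖ * ρ ^ (k + 1)) := by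
        gcongr; exact Real.prod_one_add_le_exp_sum _ hnonneg
    _ ≤ ρ ^ n * Real.exp (∑' k, ‖α k‖ * ρ ^ (k + 1)) := by
        gcongr; exact hsum.sum_le_tsum _ fun k _ => hnonneg k

end Bounds

/-- The limit `S = D(0)/D` of `Φₙ*`, written via the telescoped recursion
`Φₙ* = 1 - Σ_{k<n} αₖ z Φₖ`. -/
noncomputable def PhiStarLimit (α : ℕ → ℂ) (z : ℂ) : ℂ :=
  1 - ∑' k, α k * (z * (PhiP α k).eval z)

theorem tendstoUniformlyOn_eval_PhiStarP_closedBall {α : ℕ → ℂ} {ρ : ℝ} (hρ : 1 ≤ ρ)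
    (hsum : Summable fun k => ‖α k‖ * ρ ^ k) :
    TendstoUniformlyOn (fun n z => (PhiStarP α n).eval z) (PhiStarLimit α) atTop
      (closedBall 0 ρ) := by
  have hsum' : Summable fun k => ‖α k‖ * ρ ^ (k + 1) := by
    simpa only [pow_succ, mul_assoc] using hsum.mul_right ρ
  set B := Real.exp (∑' k, ‖α k‖ * ρ ^ (k + 1))
  have hterm : ∀ k, ∀ z ∈ closedBall (0 : ℂ) ρ,
      ‖α k * (z * (PhiP α k).eval z)‖ ≤ ‖α k‖ * ρ ^ (k + 1) * B := by
    intro k z hz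
    rw [mem_closedBall_zero_iff] at hz
    rw [norm_mul, norm_mul, pow_succ']
    have := norm_eval_PhiP_le_exp_tsum hρ hsum' hz k
    calc _ ≤ ‖α k‖ * (ρ * (ρ ^ k * B)) := by gcongr
      _ = _ := by ring
  have hseries := tendstoUniformlyOn_tsum_nat (hsum'.mul_right B) hterm
  refine ((tendsto_const_nhds (x := (1 : ℂ))).tendstoUniformlyOn_const _ |>.sub hseries).congr ?_
  exact Eventually.of_forall fun n z _ => (eval_PhiStarP_eq_one_sub_sum α n z).symm

lemma summable_norm_mul_pow_of_le_geometric {α : ℕ → ℂ} {C q ρ : ℝ} (hq : 0 ≤ q) (hρ : 0 ≤ ρ)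
    (hqρ : q * ρ < 1) (hdecay : ∀ n, ‖α n‖ ≤ C * q ^ n) :
    Summable fun k => ‖α k‖ * ρ ^ k := by
  refine .of_nonneg_of_le (fun k => by positivity) (fun k => ?_)
    ((summable_geometric_of_lt_one (by positivity) hqρ).mul_left C)
  calc ‖α k‖ * ρ ^ k ≤ C * q ^ k * ρ ^ k := by gcongr; exact hdecay k
    _ = C * (q * ρ) ^ k := by ring

theorem tendstoLocallyUniformlyOn_eval_PhiStarP_ball {α : ℕ → ℂ} {C q : ℝ} (hq0 : 0 < q)
    (hq1 : q < 1) (hdecay : ∀ n, ‖α n‖ ≤ C * q ^ n) :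
    TendstoLocallyUniformlyOn (fun n z => (PhiStarP α n).eval z) (PhiStarLimit α) atTop
      (ball 0 (1 / q)) := by
  refine (tendstoLocallyUniformlyOn_iff_forall_isCompact isOpen_ball).2 fun K hK hKc => ?_
  obtain ⟨r, ⟨-, hr⟩, hKr⟩ := exists_pos_lt_subset_ball (one_div_pos.2 hq0) hKc.isClosed hK
  have hqr : q * max r 1 < 1 := by
    rw [mul_max_of_nonneg _ _ hq0.le, mul_one]
    exact max_lt (by rwa [lt_div_iff₀ hq0, mul_comm] at hr) hq1
  refine (tendstoUniformlyOn_eval_PhiStarP_closedBall (le_max_right r 1)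
    (summable_norm_mul_pow_of_le_geometric hq0.le (by positivity) hqr hdecay)).mono ?_
  exact hKr.trans <| ball_subset_closedBall.trans <| closedBall_subset_closedBall (le_max_left r 1)

theorem stmt_3_general (α : ℕ → ℂ)
    (C q : ℝ) (hq0 : 0 < q) (hq1 : q < 1)
    (hdecay : ∀ n : ℕ, ‖α n‖ ≤ C * q ^ n) :
    ∃ S : ℂ → ℂ, AnalyticOnNhd ℂ S {z : ℂ | ‖z‖ < 1 / q} ∧
      ∀ K : Set ℂ, K ⊆ {z : ℂ | ‖z‖ < 1 / q} → IsCompact K →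
        TendstoUniformlyOn (fun (n : ℕ) (z : ℂ) => (PhiStarP α n).eval z) S atTop K := by
  have hlim := tendstoLocallyUniformlyOn_eval_PhiStarP_ball hq0 hq1 hdecay
  rw [← ball_zero_eq]
  refine ⟨PhiStarLimit α, ?_, (tendstoLocallyUniformlyOn_iff_forall_isCompact isOpen_ball).1 hlim⟩
  refine (hlim.differentiableOn ?_ isOpen_ball).analyticOnNhd isOpen_ball
  exact Eventually.of_forall fun n => (PhiStarP α n).differentiableOn

theorem stmt_3 (α : ℕ → ℂ) (hα : ∀ n, ‖α n‖ < 1)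
    (C q : ℝ) (hC : 0 < C) (hq0 : 0 < q) (hq1 : q < 1)
    (hdecay : ∀ n : ℕ, ‖α n‖ ≤ C * q ^ n) :
    ∃ S : ℂ → ℂ, AnalyticOnNhd ℂ S {z : ℂ | ‖z‖ < 1 / q} ∧
      ∀ K : Set ℂ, K ⊆ {z : ℂ | ‖z‖ < 1 / q} → IsCompact K →
        TendstoUniformlyOn (fun (n : ℕ) (z : ℂ) => (PhiStarP α n).eval z) S atTop K :=
  stmt_3_general α C q hq0 hq1 hdecay
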